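/- Consider the space of 'hairs' H_ℓ(M) = (M^{×ℓ} × [0,1]^ℓ)/∼ where ∼ is generated by: (i) permuting hairs simultaneously with their lengths, (ii) deleting a hair of length 0, (iii) if two hair-points coincide, deleting the hair of shorter length. Then the map Ξ: ⊔_ℓ H_ℓ(M) → ⊔_ℓ H_ℓ(M) that deletes all hairs of length t ≤ 1/2 and rescales each remaining hair of length t > 1/2 to length 2t−1 is well-defined (respects the relations) and continuous, and Ξ is homotopic to the identity through maps that do not increase the number of hairs. -/

import Mathlib

/-
Both `Ξ` and the identity act on a configuration by reparametrizing every hair length through a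
map `f : [0,1] → [0,1]`. If `f` is monotone and fixes `0`, it sends each generating relation
(permuting, deleting a hair of length `0`, deleting the shorter of two coinciding hairs) to a
relation of the same kind, so it descends to the quotient, and it never creates hairs. The family
`t ↦ clamp((2 - s) t - (1 - s))` joins `t ↦ clamp(2t - 1)` (at `s = 0`) to the identity
(at `s = 1`) through such maps; it is continuous in `(s, t)`, and since `[0,1]` is locally
compact, the product of the quotient map with `[0,1]` is again a quotient map, so the induced
family on configurations is a homotopy.
-/

/-- Raw hairy data on a space `M`: an `ℓ`-tuple of points (hair roots) together with hair
lengths in `[0,1]`. -/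
def RawHairs (M : Type*) : Type _ :=
  Σ ℓ : ℕ, (Fin ℓ → M) × (Fin ℓ → ↥(Set.Icc (0 : ℝ) 1))

instance (M : Type*) [TopologicalSpace M] : TopologicalSpace (RawHairs M) :=
  inferInstanceAs (TopologicalSpace (Σ ℓ : ℕ, (Fin ℓ → M) × (Fin ℓ → ↥(Set.Icc (0 : ℝ) 1))))

/-- The relations on raw hairy data: (i) hairs may be permuted simultaneously with their
lengths; (ii) a hair of length `0` is deleted; (iii) if two hair points coincide, the hair
of shorter length is deleted. -/
inductive HairRel (M : Type*) : RawHairs M → RawHairs M → Prop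
  | perm (ℓ : ℕ) (y : Fin ℓ → M) (t : Fin ℓ → ↥(Set.Icc (0 : ℝ) 1)) (σ : Equiv.Perm (Fin ℓ)) :
      HairRel M ⟨ℓ, y, t⟩ ⟨ℓ, y ∘ σ, t ∘ σ⟩
  | zero (ℓ : ℕ) (y : Fin (ℓ + 1) → M) (t : Fin (ℓ + 1) → ↥(Set.Icc (0 : ℝ) 1))
      (i : Fin (ℓ + 1)) (h : (t i : ℝ) = 0) :
      HairRel M ⟨ℓ + 1, y, t⟩ ⟨ℓ, y ∘ i.succAbove, t ∘ i.succAbove⟩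
  | collide (ℓ : ℕ) (y : Fin (ℓ + 1) → M) (t : Fin (ℓ + 1) → ↥(Set.Icc (0 : ℝ) 1))
      (i j : Fin (ℓ + 1)) (hij : i ≠ j) (hy : y i = y j) (ht : (t i : ℝ) ≤ (t j : ℝ)) :
      HairRel M ⟨ℓ + 1, y, t⟩ ⟨ℓ, y ∘ i.succAbove, t ∘ i.succAbove⟩

/-- The space of hairy configurations `⊔_ℓ H_ℓ(M)`, the quotient of the raw hairy data by
the relations above (with the quotient topology). -/
def HairSpace (M : Type*) [TopologicalSpace M] : Type _ := Quot (HairRel M)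

instance (M : Type*) [TopologicalSpace M] : TopologicalSpace (HairSpace M) :=
  inferInstanceAs (TopologicalSpace (Quot (HairRel M)))

/-- The number of hairs of a hairy configuration: the minimal number of hairs among its
representatives. -/
noncomputable def hairCount (M : Type*) [TopologicalSpace M] (x : HairSpace M) : ℕ :=
  sInf {ℓ | ∃ (y : Fin ℓ → M) (t : Fin ℓ → ↥(Set.Icc (0 : ℝ) 1)),
    Quot.mk (HairRel M) ⟨ℓ, y, t⟩ = x}

open Set Function
open scoped unitInterval

namespace RawHairs

variable {M : Type*}

def mapLengths (f : I → I) (x : RawHairs M) : RawHairs M :=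
  ⟨x.1, x.2.1, f ∘ x.2.2⟩

theorem hairRel_mapLengths {f : I → I} (hf : Monotone f) (hf0 : f 0 = 0) {a b : RawHairs M}
    (h : HairRel M a b) : HairRel M (a.mapLengths f) (b.mapLengths f) := by
  cases h with
  | perm ℓ y t e => exact .perm ℓ y (f ∘ t) e
  | zero ℓ y t i h =>
    have hti : t i = 0 := Subtype.ext h
    exact .zero ℓ y (f ∘ t) i (by simp [hti, hf0])
  | collide ℓ y t i j hij hy ht => exact .collide ℓ y (f ∘ t) i j hij hy (hf ht)

theorem continuous_mapLengths [TopologicalSpace M] {X : Type*} [TopologicalSpace X]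
    {F : X → I → I} (hF : Continuous (uncurry F)) :
    Continuous fun p : X × RawHairs M => p.2.mapLengths (F p.1) := by
  have hfiber : Continuous (Sigma.map (β₂ := fun ℓ => (Fin ℓ → M) × (Fin ℓ → I)) id
      fun ℓ (q : ((Fin ℓ → M) × (Fin ℓ → I)) × X) => (q.1.1, F q.2 ∘ q.1.2)) :=
    Continuous.sigma_map fun _ => continuous_fst.fst.prodMk <| continuous_pi fun i =>
      hF.comp (continuous_snd.prodMk ((continuous_apply i).comp continuous_fst.snd))
  exact hfiber.comp ((Homeomorph.sigmaProdDistrib (Y := X)).continuous.comp continuous_swap)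

end RawHairs

namespace HairSpace

variable {M : Type*} [TopologicalSpace M]

def mapLengths (f : I → I) (hf : Monotone f) (hf0 : f 0 = 0) : HairSpace M → HairSpace M :=
  Quot.map (RawHairs.mapLengths f) fun _ _ => RawHairs.hairRel_mapLengths hf hf0

theorem continuous_mapLengths {X : Type*} [TopologicalSpace X] [LocallyCompactSpace X]
    {F : X → I → I} (hF : Continuous (uncurry F)) (hmono : ∀ s, Monotone (F s))
    (hzero : ∀ s, F s 0 = 0) :
    Continuous fun p : X × HairSpace M => mapLengths (F p.1) (hmono p.1) (hzero p.1) p.2 :=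
  isQuotientMap_quot_mk.continuous_lift_prod_right
    (continuous_quot_mk.comp (RawHairs.continuous_mapLengths hF))

theorem hairCount_mapLengths_le {f : I → I} (hf : Monotone f) (hf0 : f 0 = 0)
    (x : HairSpace M) : hairCount M (mapLengths f hf hf0 x) ≤ hairCount M x := by
  have hrep :
      {ℓ | ∃ (y : Fin ℓ → M) (t : Fin ℓ → I), Quot.mk (HairRel M) ⟨ℓ, y, t⟩ = x}.Nonempty := by
    obtain ⟨⟨ℓ, y, t⟩, rfl⟩ := Quot.exists_rep x
    exact ⟨ℓ, y, t, rfl⟩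
  obtain ⟨y, t, hx⟩ := Nat.sInf_mem hrep
  exact Nat.sInf_le ⟨y, f ∘ t, congrArg (mapLengths f hf hf0) hx⟩

end HairSpace

noncomputable def lengthHomotopy (s t : I) : I :=
  projIcc 0 1 zero_le_one ((2 - s) * t - (1 - s))

theorem continuous_lengthHomotopy : Continuous (uncurry lengthHomotopy) :=
  continuous_projIcc.comp (by fun_prop)

theorem monotone_lengthHomotopy (s : I) : Monotone (lengthHomotopy s) := fun a b hab =>
  monotone_projIcc zero_le_one <|
    sub_le_sub_right (mul_le_mul_of_nonneg_left (α := ℝ) hab (by linarith [s.2.2])) _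

theorem lengthHomotopy_apply_zero (s : I) : lengthHomotopy s 0 = 0 :=
  projIcc_of_le_left _ (by simp [s.2.2])

theorem lengthHomotopy_zero :
    lengthHomotopy 0 = fun t : I => projIcc 0 1 zero_le_one (2 * (t : ℝ) - 1) := by
  funext t
  simp [lengthHomotopy]

theorem lengthHomotopy_one : lengthHomotopy 1 = id := by
  funext t
  norm_num [lengthHomotopy]

/-- the map `Ξ` that deletes all hairs of length `t ≤ 1/2` and rescales each
remaining hair of length `t > 1/2` to length `2t − 1` is well defined (it respects the
relations), continuous, and homotopic to the identity through maps that do not increase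
the number of hairs. -/
theorem statement14 (M : Type*) [TopologicalSpace M] :
    ∃ Xi : C(HairSpace M, HairSpace M),
      (∀ (ℓ : ℕ) (y : Fin ℓ → M) (t : Fin ℓ → ↥(Set.Icc (0 : ℝ) 1)),
        Xi (Quot.mk (HairRel M) ⟨ℓ, y, t⟩) =
          Quot.mk (HairRel M)
            ⟨ℓ, y, fun i => Set.projIcc (0 : ℝ) 1 (by norm_num) (2 * (t i : ℝ) - 1)⟩) ∧
      ∃ H : Xi.Homotopy (ContinuousMap.id (HairSpace M)),
        ∀ p : unitInterval × HairSpace M, hairCount M (H p) ≤ hairCount M p.2 := by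
  let H : C(I × HairSpace M, HairSpace M) :=
    ⟨_, HairSpace.continuous_mapLengths continuous_lengthHomotopy monotone_lengthHomotopy
      lengthHomotopy_apply_zero⟩
  refine ⟨H.curry 0, fun ℓ y t => ?_, ⟨H, fun _ => rfl, fun x => ?_⟩,
    fun p => HairSpace.hairCount_mapLengths_le (monotone_lengthHomotopy p.1)
      (lengthHomotopy_apply_zero p.1) p.2⟩
  · change Quot.mk _ (⟨ℓ, y, lengthHomotopy 0 ∘ t⟩ : RawHairs M) = _
    rw [lengthHomotopy_zero]
    rfl
  · obtain ⟨a, rfl⟩ := Quot.exists_rep x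
    change Quot.mk _ (a.mapLengths (lengthHomotopy 1)) = Quot.mk _ a
    rw [lengthHomotopy_one]
    rfl
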